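/- Let d ∈ ℕ, α > 0, let γ_u > 0 for each subset u ⊆ {1,…,d}, let λ ∈ (0, α), let p be a prime, and let h ∈ ℤ^d. With G^{(p)} = { z ∈ {0,…,p−1}^d : Σ_{k ∈ ℤ^d∖{0}, k·z ≡ 0 (mod p)} r_{α,γ}(k)^{−1/λ} ≤ (4/p)·μ_λ }, one has (1/|G^{(p)}|) · Σ_{z ∈ G^{(p)}} 𝟙(h·z ≡ 0 (mod p)) ≤ 𝟙(h ≡ 0 (mod p)) + 2/p, where 𝟙(h ≡ 0 (mod p)) means every component of h is divisible by p. -/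

import Mathlib

open scoped BigOperators Classical ENNReal
open MeasureTheory

noncomputable def rfun (d : ℕ) (α : ℝ) (γ : Finset (Fin d) → ℝ) (h : Fin d → ℤ) : ℝ :=
  (γ (Finset.univ.filter fun j => h j ≠ 0))⁻¹ *
    ∏ j ∈ Finset.univ.filter fun j => h j ≠ 0, |(h j : ℝ)| ^ α

/-- `μ_λ = Σ_{h ∈ ℤ^d \ {0}} r_{α,γ}(h)^(-1/λ)`. -/
noncomputable def mu (d : ℕ) (α : ℝ) (γ : Finset (Fin d) → ℝ) (lam : ℝ) : ℝ :=
  ∑' h : {h : Fin d → ℤ // h ≠ 0}, rfun d α γ h.1 ^ (-1 / lam)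

/-- The good set `G^{(p)}` of generating vectors in `{0,...,p-1}^d`. -/
noncomputable def Gset (d : ℕ) (α : ℝ) (γ : Finset (Fin d) → ℝ) (lam : ℝ) (p : ℕ) :
    Finset (Fin d → Fin p) :=
  Finset.univ.filter fun z =>
    (∑' h : {h : Fin d → ℤ // h ≠ 0 ∧ (p : ℤ) ∣ ∑ j, h j * ((z j : ℕ) : ℤ)},
      rfun d α γ h.1 ^ (-1 / lam)) ≤ 4 / p * mu d α γ lam

noncomputable def Ffun (b : ℝ) (n : ℤ) : ℝ := if n = 0 then 1 else |(n:ℝ)| ^ (-b)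

lemma Ffun_nonneg (b : ℝ) (n : ℤ) : 0 ≤ Ffun b n := by
  unfold Ffun; split
  · norm_num
  · positivity

lemma Ffun_summable {b : ℝ} (hb : 1 < b) : Summable (Ffun b) := by
  have h1 : Summable fun n : ℤ => |(n : ℝ)| ^ (-b) := Real.summable_abs_int_rpow hb
  have h2 : Summable fun n : ℤ => (if n = 0 then (1:ℝ) else 0) := by
    apply summable_of_ne_finset_zero (s := {0})
    intro n hn
    simp only [Finset.mem_singleton] at hn
    simp [hn]
  refine (h1.add h2).congr fun n => ?_
  by_cases hn : n = 0
  · subst hn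
    simp [Ffun, Real.zero_rpow (by linarith : -b ≠ 0)]
  · simp [Ffun, hn]

lemma rfun_pos {d : ℕ} {α : ℝ} {γ : Finset (Fin d) → ℝ} (hγ : ∀ u, 0 < γ u)
    (h : Fin d → ℤ) : 0 < rfun d α γ h := by
  unfold rfun
  apply mul_pos (inv_pos.2 (hγ _))
  apply Finset.prod_pos
  intro j hj
  simp only [Finset.mem_filter] at hj
  apply Real.rpow_pos_of_pos
  rw [abs_pos, Int.cast_ne_zero]
  exact hj.2

lemma rpow_rfun_eq {d : ℕ} {α : ℝ} {γ : Finset (Fin d) → ℝ} {lam : ℝ}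
    (hγ : ∀ u, 0 < γ u) (h : Fin d → ℤ) :
    rfun d α γ h ^ (-1/lam)
      = γ (Finset.univ.filter fun j => h j ≠ 0) ^ (1/lam) * ∏ j, Ffun (α/lam) (h j) := by
  set u := Finset.univ.filter fun j => h j ≠ 0 with hu
  have hP : (0:ℝ) ≤ ∏ j ∈ u, |(h j : ℝ)| ^ α :=
    Finset.prod_nonneg fun j _ => Real.rpow_nonneg (abs_nonneg _) _
  unfold rfun
  rw [Real.mul_rpow (inv_nonneg.2 (hγ _).le) hP]
  congr 1
  · rw [← Real.rpow_neg_one (γ u), ← Real.rpow_mul (hγ u).le]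
    congr 1; ring
  · rw [← Real.finset_prod_rpow u _ (fun j _ => Real.rpow_nonneg (abs_nonneg _) _)]
    rw [Finset.prod_filter]
    apply Finset.prod_congr rfl
    intro j _
    by_cases hj : h j = 0
    · simp [Ffun, hj]
    · rw [if_pos hj, ← Real.rpow_mul (abs_nonneg _)]
      simp only [Ffun, if_neg hj]
      rw [show α * (-1/lam) = -(α/lam) by ring]

lemma summable_pi_prod {f : ℤ → ℝ} (hf0 : ∀ x, 0 ≤ f x) (hf : Summable f) (n : ℕ) :
    Summable (fun h : Fin n → ℤ => ∏ j, f (h j)) := by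
  induction n with
  | zero => exact Summable.of_finite
  | succ n ih =>
      have hm : Summable (fun q : ℤ × (Fin n → ℤ) => f q.1 * ∏ j, f (q.2 j)) :=
        Summable.mul_of_nonneg (g := fun h : Fin n → ℤ => ∏ j, f (h j)) hf ih hf0
          (fun h => Finset.prod_nonneg fun j _ => hf0 _)
      refine ((Fin.consEquiv (fun _ : Fin (n+1) => ℤ)).summable_iff
        (f := fun h : Fin (n+1) → ℤ => ∏ j, f (h j))).mp ?_
      refine hm.congr fun q => ?_
      show f q.1 * ∏ j, f (q.2 j)
        = ∏ j : Fin (n+1), f ((Fin.consEquiv (fun _ : Fin (n+1) => ℤ)) q j)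
      rw [Fin.prod_univ_succ]
      simp [Fin.consEquiv]

lemma w_pmul {d : ℕ} {α : ℝ} {γ : Finset (Fin d) → ℝ} {lam : ℝ}
    (hα : 0 < α) (hγ : ∀ u, 0 < γ u) (hlam : lam ∈ Set.Ioo 0 α) {p : ℕ} (hp : p.Prime)
    (m : Fin d → ℤ) (hm : m ≠ 0) :
    rfun d α γ (fun j => p * m j) ^ (-1/lam) ≤ 1/p * (rfun d α γ m ^ (-1/lam)) := by
  have hl0 : 0 < lam := hlam.1
  have hp1 : (1:ℝ) < p := by exact_mod_cast hp.one_lt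
  have hp0 : (0:ℝ) < p := by linarith
  set u := Finset.univ.filter fun j => m j ≠ 0 with hu
  have hsupp : (Finset.univ.filter fun j => (p:ℤ) * m j ≠ 0) = u := by
    apply Finset.filter_congr
    intro j _
    simp [mul_ne_zero_iff, hp.ne_zero]
  have hcard : 1 ≤ u.card := by
    rw [Nat.one_le_iff_ne_zero, ← Nat.pos_iff_ne_zero, Finset.card_pos]
    obtain ⟨j, hj⟩ := Function.ne_iff.mp hm
    exact ⟨j, by simp only [hu, Finset.mem_filter, Finset.mem_univ, true_and]; simpa using hj⟩
  have hrf : rfun d α γ (fun j => (p:ℤ) * m j)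
      = ((p:ℝ) ^ α) ^ u.card * rfun d α γ m := by
    unfold rfun
    rw [hsupp, ← hu]
    rw [mul_left_comm]
    congr 1
    rw [← Finset.prod_const, ← Finset.prod_mul_distrib]
    apply Finset.prod_congr rfl
    intro j _
    push_cast
    rw [abs_mul, abs_of_pos hp0, Real.mul_rpow hp0.le (abs_nonneg _)]
  rw [hrf, Real.mul_rpow (by positivity) (rfun_pos hγ m).le]
  apply mul_le_mul_of_nonneg_right _ (Real.rpow_nonneg (rfun_pos hγ m).le _)
  rw [← Real.rpow_natCast ((p:ℝ) ^ α) u.card, ← Real.rpow_mul hp0.le,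
    ← Real.rpow_mul hp0.le]
  have : (p:ℝ) ^ (α * (u.card:ℝ) * (-1/lam)) ≤ (p:ℝ) ^ (-1:ℝ) := by
    rw [Real.rpow_le_rpow_left_iff hp1]
    rw [show α * (u.card:ℝ) * (-1/lam) = -(α * u.card / lam) by ring, neg_le_neg_iff,
      le_div_iff₀ hl0, one_mul]
    calc lam ≤ α := hlam.2.le
    _ = α * 1 := by ring
    _ ≤ α * u.card := by
        apply mul_le_mul_of_nonneg_left _ hα.le
        exact_mod_cast hcard
  refine this.trans_eq ?_
  rw [Real.rpow_neg_one, one_div]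

lemma count_le {d : ℕ} {p : ℕ} (hp : p.Prime) (a : Fin d → ℤ) (j0 : Fin d)
    (ha : ¬ (p:ℤ) ∣ a j0) :
    (Finset.univ.filter fun z : Fin d → Fin p =>
        (p:ℤ) ∣ ∑ j, a j * ((z j : ℕ) : ℤ)).card ≤ p ^ (d-1) := by
  haveI : Fact p.Prime := ⟨hp⟩
  haveI : NeZero p := ⟨hp.ne_zero⟩
  set s := Finset.univ.filter fun z : Fin d → Fin p =>
      (p:ℤ) ∣ ∑ j, a j * ((z j : ℕ) : ℤ) with hs
  have key : ∀ z ∈ s, ∑ j, (a j : ZMod p) * ((z j : ℕ) : ZMod p) = 0 := by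
    intro z hz
    rw [hs, Finset.mem_filter] at hz
    have := (ZMod.intCast_zmod_eq_zero_iff_dvd _ p).mpr hz.2
    push_cast at this
    convert this using 2
  have hinj : Set.InjOn (fun (z : Fin d → Fin p) (j : {j : Fin d // j ≠ j0}) =>
      ((z j.1 : ℕ) : ZMod p)) s := by
    intro z hz z' hz' hzz
    have hval : ∀ j : Fin d, j ≠ j0 → z j = z' j := by
      intro j hj
      have := congrFun hzz ⟨j, hj⟩
      simp only at this
      have := congrArg ZMod.val this
      rw [ZMod.val_natCast_of_lt (z j).2, ZMod.val_natCast_of_lt (z' j).2] at this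
      exact Fin.val_injective this
    funext j
    by_cases hj : j = j0
    · subst hj
      have e1 := key z hz
      have e2 := key z' hz'
      rw [← Finset.add_sum_erase _ _ (Finset.mem_univ j)] at e1 e2
      have hrest : ∑ x ∈ Finset.univ.erase j, (a x : ZMod p) * ((z x : ℕ) : ZMod p)
          = ∑ x ∈ Finset.univ.erase j, (a x : ZMod p) * ((z' x : ℕ) : ZMod p) := by
        apply Finset.sum_congr rfl
        intro x hx
        rw [hval x (Finset.mem_erase.mp hx).1]
      rw [hrest] at e1
      have heq : (a j : ZMod p) * ((z j : ℕ) : ZMod p)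
          = (a j : ZMod p) * ((z' j : ℕ) : ZMod p) := by
        have := e1.trans e2.symm
        linear_combination this
      have ha0 : (a j : ZMod p) ≠ 0 := by
        rw [Ne, ZMod.intCast_zmod_eq_zero_iff_dvd]
        exact ha
      have := mul_left_cancel₀ ha0 heq
      have := congrArg ZMod.val this
      rw [ZMod.val_natCast_of_lt (z j).2, ZMod.val_natCast_of_lt (z' j).2] at this
      exact Fin.val_injective this
    · exact hval j hj
  calc s.card ≤ Fintype.card ({j : Fin d // j ≠ j0} → ZMod p) :=
        (Finset.card_le_card_of_injOn _ (fun x _ => Finset.mem_univ _) hinj).trans_eq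
          Finset.card_univ
  _ ≤ p ^ (d-1) := by
        rw [Fintype.card_fun, ZMod.card]
        apply Nat.pow_le_pow_right hp.pos
        rw [Fintype.card_subtype_compl]
        simp

section main

variable {d : ℕ} {α : ℝ} {γ : Finset (Fin d) → ℝ} {lam : ℝ}

/-- Indicator version of the weight function. -/
noncomputable def WI (d : ℕ) (α : ℝ) (γ : Finset (Fin d) → ℝ) (lam : ℝ)
    (C : (Fin d → ℤ) → Prop) (h : Fin d → ℤ) : ℝ :=
  if C h then rfun d α γ h ^ (-1/lam) else 0

lemma WI_nonneg (hγ : ∀ u, 0 < γ u) (C : (Fin d → ℤ) → Prop) (h : Fin d → ℤ) :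
    0 ≤ WI d α γ lam C h := by
  unfold WI; split
  · exact Real.rpow_nonneg (rfun_pos hγ h).le _
  · exact le_rfl

lemma WI_le (hγ : ∀ u, 0 < γ u) (C : (Fin d → ℤ) → Prop) (h : Fin d → ℤ) :
    WI d α γ lam C h ≤ rfun d α γ h ^ (-1/lam) := by
  unfold WI; split
  · exact le_rfl
  · exact Real.rpow_nonneg (rfun_pos hγ h).le _

lemma WI_mono (hγ : ∀ u, 0 < γ u) {C C' : (Fin d → ℤ) → Prop} (hCC : ∀ h, C h → C' h)
    (h : Fin d → ℤ) : WI d α γ lam C h ≤ WI d α γ lam C' h := by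
  unfold WI
  by_cases hc : C h
  · rw [if_pos hc, if_pos (hCC h hc)]
  · rw [if_neg hc]
    split
    · exact Real.rpow_nonneg (rfun_pos hγ h).le _
    · exact le_rfl

lemma w_summable (hα : 0 < α) (hγ : ∀ u, 0 < γ u) (hlam : lam ∈ Set.Ioo 0 α) :
    Summable (fun h : Fin d → ℤ => rfun d α γ h ^ (-1/lam)) := by
  have hb : 1 < α / lam := (one_lt_div hlam.1).2 hlam.2
  set C : ℝ := ∑ u : Finset (Fin d), γ u ^ (1/lam) with hC
  have hFs := summable_pi_prod (Ffun_nonneg (α/lam)) (Ffun_summable hb) d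
  apply Summable.of_nonneg_of_le
    (fun h => Real.rpow_nonneg (rfun_pos hγ h).le _)
    (fun h => ?_) (hFs.mul_left C)
  rw [rpow_rfun_eq hγ h]
  apply mul_le_mul_of_nonneg_right _ (Finset.prod_nonneg fun j _ => Ffun_nonneg _ _)
  exact Finset.single_le_sum (f := fun u => γ u ^ (1/lam))
    (fun u _ => Real.rpow_nonneg (hγ u).le _) (Finset.mem_univ _)

lemma ind_summable (hα : 0 < α) (hγ : ∀ u, 0 < γ u) (hlam : lam ∈ Set.Ioo 0 α)
    (C : (Fin d → ℤ) → Prop) : Summable (WI d α γ lam C) :=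
  Summable.of_nonneg_of_le (WI_nonneg hγ C) (WI_le hγ C) (w_summable hα hγ hlam)

/-- tsum over a subtype equals indicator tsum. -/
lemma tsum_sub_eq (C : (Fin d → ℤ) → Prop) :
    (∑' h : {h : Fin d → ℤ // C h}, rfun d α γ h.1 ^ (-1/lam))
      = ∑' h : Fin d → ℤ, WI d α γ lam C h := by
  refine (tsum_subtype {h : Fin d → ℤ | C h}
    (fun h => rfun d α γ h ^ (-1/lam))).trans (tsum_congr fun h => ?_)
  by_cases hc : C h
  · simp [Set.indicator_apply, WI, hc]
  · simp [Set.indicator_apply, WI, hc]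

lemma mu_eq : mu d α γ lam = ∑' h : Fin d → ℤ, WI d α γ lam (fun h => h ≠ 0) h :=
  tsum_sub_eq _

lemma mu_nonneg (hγ : ∀ u, 0 < γ u) : 0 ≤ mu d α γ lam := by
  rw [mu_eq]
  exact tsum_nonneg (WI_nonneg hγ _)

lemma mu_pos (hd : 0 < d) (hα : 0 < α) (hγ : ∀ u, 0 < γ u) (hlam : lam ∈ Set.Ioo 0 α) :
    0 < mu d α γ lam := by
  rw [mu_eq]
  have h1 : (fun _ : Fin d => (1:ℤ)) ≠ 0 := by
    intro hcontra
    have := congrFun hcontra ⟨0, hd⟩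
    simp at this
  apply Summable.tsum_pos (ind_summable hα hγ hlam _) (WI_nonneg hγ _) (fun _ : Fin d => (1:ℤ))
  simp only [WI]
  rw [if_pos h1]
  exact Real.rpow_pos_of_pos (rfun_pos hγ _) _

/-- The divisible part of the sum is at most `μ/p`. -/
lemma div_part_le (hα : 0 < α) (hγ : ∀ u, 0 < γ u) (hlam : lam ∈ Set.Ioo 0 α)
    {p : ℕ} (hp : p.Prime) :
    (∑' h : Fin d → ℤ, WI d α γ lam (fun h => h ≠ 0 ∧ ∀ j, (p:ℤ) ∣ h j) h)
      ≤ 1/p * mu d α γ lam := by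
  have hp0 : (0:ℝ) < p := by exact_mod_cast hp.pos
  set f : (Fin d → ℤ) → ℝ := WI d α γ lam (fun h => h ≠ 0 ∧ ∀ j, (p:ℤ) ∣ h j) with hf
  set i : (Fin d → ℤ) → (Fin d → ℤ) := fun m j => p * m j with hi
  have hiinj : Function.Injective i := by
    intro m m' hmm
    funext j
    have := congrFun hmm j
    simp only [hi] at this
    exact mul_left_cancel₀ (by exact_mod_cast hp.ne_zero : (p:ℤ) ≠ 0) this
  have hsupp : Function.support f ⊆ Set.range i := by
    intro h hh
    rw [Function.mem_support, hf] at hh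
    simp only [WI] at hh
    have hcond : h ≠ 0 ∧ (∀ j, (p:ℤ) ∣ h j) := by
      by_contra hc
      simp [hc] at hh
    refine ⟨fun j => h j / p, ?_⟩
    funext j
    simp only [hi]
    exact Int.mul_ediv_cancel' (hcond.2 j)
  rw [← hiinj.tsum_eq hsupp]
  have hmn : ∀ m : Fin d → ℤ, i m ≠ 0 ↔ m ≠ 0 := by
    intro m
    constructor
    · intro him hm; apply him; rw [hm]; funext j; simp [hi]
    · intro hm him
      apply hm
      funext j
      have := congrFun him j
      simp only [hi, Pi.zero_apply, mul_eq_zero] at this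
      rcases this with h1 | h1
      · exact absurd (by exact_mod_cast h1) hp.ne_zero
      · simp [h1]
  have hpt : ∀ m : Fin d → ℤ, f (i m)
      ≤ 1/p * WI d α γ lam (fun h => h ≠ 0) m := by
    intro m
    by_cases hm : m = 0
    · subst hm
      have hiz : i 0 = 0 := by funext j; simp [hi]
      have h0 : f (i 0) = 0 := by
        rw [hiz, hf]
        simp only [WI]
        rw [if_neg]
        simp
      rw [h0]
      simp only [WI]
      rw [if_neg (by simp)]
      simp
    · have hdvd : ∀ j, (p:ℤ) ∣ i m j := fun j => Dvd.intro (m j) rfl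
      simp only [hf, WI]
      rw [if_pos ⟨(hmn m).2 hm, hdvd⟩, if_pos hm]
      simp only [hi]
      exact w_pmul hα hγ hlam hp m hm
  have hsumR : Summable (fun m : Fin d → ℤ => 1/p * WI d α γ lam (fun h => h ≠ 0) m) :=
    (ind_summable hα hγ hlam _).mul_left _
  have hfi_nonneg : ∀ m, 0 ≤ f (i m) := fun m => WI_nonneg hγ _ _
  calc (∑' m, f (i m)) ≤ ∑' m : Fin d → ℤ, 1/p * WI d α γ lam (fun h => h ≠ 0) m :=
        Summable.tsum_le_tsum hpt (Summable.of_nonneg_of_le hfi_nonneg hpt hsumR) hsumR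
  _ = 1/p * mu d α γ lam := by
      rw [Summable.tsum_mul_left _ (ind_summable hα hγ hlam _), mu_eq]

lemma sum_T_le (hα : 0 < α) (hγ : ∀ u, 0 < γ u) (hlam : lam ∈ Set.Ioo 0 α)
    {p : ℕ} (hp : p.Prime) :
    ∑ z : Fin d → Fin p,
        (∑' h : Fin d → ℤ,
          WI d α γ lam (fun h => h ≠ 0 ∧ (p:ℤ) ∣ ∑ j, h j * ((z j : ℕ) : ℤ)) h)
      ≤ (p:ℝ)^(d-1) * mu d α γ lam + (p:ℝ)^d * (1/p * mu d α γ lam) := by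
  have hp0 : (0:ℝ) < p := by exact_mod_cast hp.pos
  have hswap := Summable.tsum_finsetSum (f := fun (z : Fin d → Fin p) (h : Fin d → ℤ) =>
      WI d α γ lam (fun h => h ≠ 0 ∧ (p:ℤ) ∣ ∑ j, h j * ((z j : ℕ) : ℤ)) h)
    (s := Finset.univ) (fun z _ => ind_summable hα hγ hlam _)
  rw [← hswap]
  set B : (Fin d → ℤ) → ℝ := fun h =>
    (p:ℝ)^(d-1) * WI d α γ lam (fun h => h ≠ 0) h
      + (p:ℝ)^d * WI d α γ lam (fun h => h ≠ 0 ∧ ∀ j, (p:ℤ) ∣ h j) h with hB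
  have hpt : ∀ h : Fin d → ℤ,
      (∑ z : Fin d → Fin p,
        WI d α γ lam (fun h => h ≠ 0 ∧ (p:ℤ) ∣ ∑ j, h j * ((z j : ℕ) : ℤ)) h) ≤ B h := by
    intro h
    by_cases hz : h = 0
    · subst hz
      rw [hB]
      simp [WI]
    · have hsum : ∀ z : Fin d → Fin p,
          WI d α γ lam (fun h => h ≠ 0 ∧ (p:ℤ) ∣ ∑ j, h j * ((z j : ℕ) : ℤ)) h
            = if (p:ℤ) ∣ ∑ j, h j * ((z j : ℕ) : ℤ)
                then rfun d α γ h ^ (-1/lam) else 0 := by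
        intro z
        simp only [WI]
        by_cases hd2 : (p:ℤ) ∣ ∑ j, h j * ((z j : ℕ) : ℤ)
        · rw [if_pos ⟨hz, hd2⟩, if_pos hd2]
        · rw [if_neg (by tauto), if_neg hd2]
      have hcount : (∑ z : Fin d → Fin p,
          WI d α γ lam (fun h => h ≠ 0 ∧ (p:ℤ) ∣ ∑ j, h j * ((z j : ℕ) : ℤ)) h)
          = ((Finset.univ.filter fun z : Fin d → Fin p =>
              (p:ℤ) ∣ ∑ j, h j * ((z j : ℕ) : ℤ)).card : ℝ)
            * (rfun d α γ h ^ (-1/lam)) := by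
        rw [Finset.sum_congr rfl (fun z _ => hsum z), ← Finset.sum_filter,
          Finset.sum_const, nsmul_eq_mul]
      rw [hcount]
      have hw0 : 0 ≤ rfun d α γ h ^ (-1/lam) := Real.rpow_nonneg (rfun_pos hγ h).le _
      by_cases hall : ∀ j, (p:ℤ) ∣ h j
      · have hcard : ((Finset.univ.filter fun z : Fin d → Fin p =>
            (p:ℤ) ∣ ∑ j, h j * ((z j : ℕ) : ℤ)).card : ℝ) ≤ (p:ℝ)^d := by
          have h1 := Finset.card_filter_le (Finset.univ : Finset (Fin d → Fin p))
            (fun z => (p:ℤ) ∣ ∑ j, h j * ((z j : ℕ) : ℤ))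
          have h2 : (Finset.univ : Finset (Fin d → Fin p)).card = p ^ d := by
            rw [Finset.card_univ, Fintype.card_fun]
            simp
          calc ((Finset.univ.filter fun z : Fin d → Fin p =>
              (p:ℤ) ∣ ∑ j, h j * ((z j : ℕ) : ℤ)).card : ℝ)
              ≤ ((Finset.univ : Finset (Fin d → Fin p)).card : ℝ) := by exact_mod_cast h1
          _ = (p:ℝ)^d := by rw [h2]; push_cast; ring
        rw [hB]
        simp only [WI]
        rw [if_pos hz, if_pos ⟨hz, hall⟩]
        have t1 : (0:ℝ) ≤ (p:ℝ)^(d-1) * (rfun d α γ h ^ (-1/lam)) := by positivity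
        nlinarith [mul_le_mul_of_nonneg_right hcard hw0]
      · push_neg at hall
        obtain ⟨j0, hj0⟩ := hall
        have hcard : ((Finset.univ.filter fun z : Fin d → Fin p =>
            (p:ℤ) ∣ ∑ j, h j * ((z j : ℕ) : ℤ)).card : ℝ) ≤ (p:ℝ)^(d-1) := by
          have := count_le hp h j0 hj0
          calc ((Finset.univ.filter fun z : Fin d → Fin p =>
              (p:ℤ) ∣ ∑ j, h j * ((z j : ℕ) : ℤ)).card : ℝ) ≤ ((p:ℕ)^(d-1) : ℝ) := by
                exact_mod_cast this
          _ = (p:ℝ)^(d-1) := by push_cast; ring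
        rw [hB]
        simp only [WI]
        rw [if_pos hz, if_neg (by tauto)]
        have := mul_le_mul_of_nonneg_right hcard hw0
        nlinarith
  have hBsum : Summable B := by
    rw [hB]
    exact ((ind_summable hα hγ hlam _).mul_left _).add
      ((ind_summable hα hγ hlam _).mul_left _)
  have hLsum : Summable (fun h : Fin d → ℤ => ∑ z : Fin d → Fin p,
      WI d α γ lam (fun h => h ≠ 0 ∧ (p:ℤ) ∣ ∑ j, h j * ((z j : ℕ) : ℤ)) h) := by
    apply summable_sum
    intro z _
    exact ind_summable hα hγ hlam _
  calc (∑' h : Fin d → ℤ, ∑ z : Fin d → Fin p,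
        WI d α γ lam (fun h => h ≠ 0 ∧ (p:ℤ) ∣ ∑ j, h j * ((z j : ℕ) : ℤ)) h)
      ≤ ∑' h, B h := Summable.tsum_le_tsum hpt hLsum hBsum
  _ = (p:ℝ)^(d-1) * (∑' h, WI d α γ lam (fun h => h ≠ 0) h)
        + (p:ℝ)^d * (∑' h, WI d α γ lam (fun h => h ≠ 0 ∧ ∀ j, (p:ℤ) ∣ h j) h) := by
      rw [hB, Summable.tsum_add ((ind_summable hα hγ hlam _).mul_left _)
        ((ind_summable hα hγ hlam _).mul_left _),
        Summable.tsum_mul_left _ (ind_summable hα hγ hlam _),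
        Summable.tsum_mul_left _ (ind_summable hα hγ hlam _)]
  _ ≤ (p:ℝ)^(d-1) * mu d α γ lam + (p:ℝ)^d * (1/p * mu d α γ lam) := by
      have h1 : (∑' h, WI d α γ lam (fun h : Fin d → ℤ => h ≠ 0) h) = mu d α γ lam :=
        mu_eq.symm
      have h2 := div_part_le hα hγ hlam hp
      rw [h1]
      have hpd : (0:ℝ) ≤ (p:ℝ)^d := by positivity
      nlinarith [mul_le_mul_of_nonneg_left h2 hpd]

lemma half_card (hd : 0 < d) (hα : 0 < α) (hγ : ∀ u, 0 < γ u)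
    (hlam : lam ∈ Set.Ioo 0 α) {p : ℕ} (hp : p.Prime) :
    ((p:ℝ)^d)/2 ≤ ((Gset d α γ lam p).card : ℝ) := by
  have hp0 : (0:ℝ) < p := by exact_mod_cast hp.pos
  set P : (Fin d → Fin p) → Prop := fun z =>
    (∑' h : {h : Fin d → ℤ // h ≠ 0 ∧ (p : ℤ) ∣ ∑ j, h j * ((z j : ℕ) : ℤ)},
      rfun d α γ h.1 ^ (-1 / lam)) ≤ 4 / p * mu d α γ lam with hP
  have hG : Gset d α γ lam p = Finset.univ.filter P := rfl
  set Bc := Finset.univ.filter (fun z => ¬ P z) with hBc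
  have hTz : ∀ z : Fin d → Fin p,
      (∑' h : {h : Fin d → ℤ // h ≠ 0 ∧ (p : ℤ) ∣ ∑ j, h j * ((z j : ℕ) : ℤ)},
        rfun d α γ h.1 ^ (-1 / lam))
      = ∑' h : Fin d → ℤ,
          WI d α γ lam (fun h => h ≠ 0 ∧ (p:ℤ) ∣ ∑ j, h j * ((z j : ℕ) : ℤ)) h :=
    fun z => tsum_sub_eq _
  have hmu : 0 < mu d α γ lam := mu_pos hd hα hγ hlam
  have hBcle : (Bc.card : ℝ) * (4/p * mu d α γ lam)
      ≤ (p:ℝ)^(d-1) * mu d α γ lam + (p:ℝ)^d * (1/p * mu d α γ lam) := by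
    have step1 : (Bc.card : ℝ) * (4/p * mu d α γ lam) ≤ ∑ z ∈ Bc,
        (∑' h : {h : Fin d → ℤ // h ≠ 0 ∧ (p : ℤ) ∣ ∑ j, h j * ((z j : ℕ) : ℤ)},
          rfun d α γ h.1 ^ (-1 / lam)) := by
      rw [← nsmul_eq_mul]
      apply Finset.card_nsmul_le_sum
      intro z hz
      rw [hBc, Finset.mem_filter] at hz
      exact (not_le.mp hz.2).le
    have step2 : ∑ z ∈ Bc,
        (∑' h : {h : Fin d → ℤ // h ≠ 0 ∧ (p : ℤ) ∣ ∑ j, h j * ((z j : ℕ) : ℤ)},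
          rfun d α γ h.1 ^ (-1 / lam))
        ≤ ∑ z : Fin d → Fin p,
        (∑' h : {h : Fin d → ℤ // h ≠ 0 ∧ (p : ℤ) ∣ ∑ j, h j * ((z j : ℕ) : ℤ)},
          rfun d α γ h.1 ^ (-1 / lam)) := by
      apply Finset.sum_le_sum_of_subset_of_nonneg (Finset.subset_univ _)
      intro z _ _
      rw [hTz z]
      exact tsum_nonneg (WI_nonneg hγ _)
    have step3 := sum_T_le hα hγ hlam hp (d := d) (γ := γ)
    calc (Bc.card : ℝ) * (4/p * mu d α γ lam) ≤ _ := step1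
    _ ≤ _ := step2
    _ = ∑ z : Fin d → Fin p, (∑' h : Fin d → ℤ,
          WI d α γ lam (fun h => h ≠ 0 ∧ (p:ℤ) ∣ ∑ j, h j * ((z j : ℕ) : ℤ)) h) :=
        Finset.sum_congr rfl (fun z _ => hTz z)
    _ ≤ _ := step3
  have hsplit : (Gset d α γ lam p).card + Bc.card = p ^ d := by
    rw [hG, hBc]
    rw [Finset.card_filter_add_card_filter_not]
    rw [Finset.card_univ, Fintype.card_fun]
    simp
  have hpd : (p:ℝ)^d = (p:ℝ)^(d-1) * p := by
    rw [← pow_succ]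
    congr 1
    omega
  have hBchalf : (Bc.card : ℝ) ≤ (p:ℝ)^d / 2 := by
    rw [hpd] at hBcle ⊢
    have h4 : (0:ℝ) < 4/p * mu d α γ lam := by positivity
    rw [← mul_le_mul_iff_of_pos_right h4]
    calc (Bc.card : ℝ) * (4/p * mu d α γ lam)
        ≤ (p:ℝ)^(d-1) * mu d α γ lam + (p:ℝ)^(d-1) * p * (1/p * mu d α γ lam) := hBcle
    _ = (p:ℝ)^(d-1) * p / 2 * (4/p * mu d α γ lam) := by
        field_simp
        ring
  have hcast : ((Gset d α γ lam p).card : ℝ) + (Bc.card : ℝ) = (p:ℝ)^d := by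
    rw [← Nat.cast_add, hsplit]
    push_cast
    ring
  linarith

end main

theorem stmt11 (d : ℕ) (α : ℝ) (hα : 0 < α) (γ : Finset (Fin d) → ℝ)
    (hγ : ∀ u, 0 < γ u) (lam : ℝ) (hlam : lam ∈ Set.Ioo 0 α) (p : ℕ) (hp : p.Prime)
    (h : Fin d → ℤ) :
    ((Gset d α γ lam p).card : ℝ)⁻¹ *
        ∑ z ∈ Gset d α γ lam p,
          (if (p : ℤ) ∣ ∑ j, h j * ((z j : ℕ) : ℤ) then (1 : ℝ) else 0)
      ≤ (if ∀ j, (p : ℤ) ∣ h j then (1 : ℝ) else 0) + 2 / p := by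
  have hp0 : (0:ℝ) < p := by exact_mod_cast hp.pos
  have h2p : (0:ℝ) ≤ 2 / p := by positivity
  by_cases hall : ∀ j, (p:ℤ) ∣ h j
  · rw [if_pos hall]
    have h1 : (∑ z ∈ Gset d α γ lam p,
        (if (p : ℤ) ∣ ∑ j, h j * ((z j : ℕ) : ℤ) then (1 : ℝ) else 0))
        ≤ ((Gset d α γ lam p).card : ℝ) := by
      calc (∑ z ∈ Gset d α γ lam p,
          (if (p : ℤ) ∣ ∑ j, h j * ((z j : ℕ) : ℤ) then (1 : ℝ) else 0))
          ≤ ∑ _z ∈ Gset d α γ lam p, (1:ℝ) :=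
            Finset.sum_le_sum (fun z _ => by split <;> norm_num)
      _ = ((Gset d α γ lam p).card : ℝ) := by
          rw [Finset.sum_const, nsmul_eq_mul, mul_one]
    rcases Nat.eq_zero_or_pos (Gset d α γ lam p).card with hc | hc
    · rw [hc]
      push_cast
      rw [inv_zero, zero_mul]
      positivity
    · have hcpos : (0:ℝ) < ((Gset d α γ lam p).card : ℝ) := by exact_mod_cast hc
      have := mul_le_mul_of_nonneg_left h1 (inv_nonneg.2 hcpos.le)
      rw [inv_mul_cancel₀ hcpos.ne'] at this
      linarith
  · rw [if_neg hall]
    push_neg at hall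
    obtain ⟨j0, hj0⟩ := hall
    have hd : 0 < d := j0.pos
    have hhalf := half_card hd hα hγ hlam hp (γ := γ)
    have hGpos : (0:ℝ) < ((Gset d α γ lam p).card : ℝ) :=
      lt_of_lt_of_le (by positivity) hhalf
    have hsum : (∑ z ∈ Gset d α γ lam p,
        (if (p : ℤ) ∣ ∑ j, h j * ((z j : ℕ) : ℤ) then (1 : ℝ) else 0))
        ≤ (p:ℝ)^(d-1) := by
      calc (∑ z ∈ Gset d α γ lam p,
          (if (p : ℤ) ∣ ∑ j, h j * ((z j : ℕ) : ℤ) then (1 : ℝ) else 0))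
          ≤ ∑ z : Fin d → Fin p,
            (if (p : ℤ) ∣ ∑ j, h j * ((z j : ℕ) : ℤ) then (1 : ℝ) else 0) := by
            apply Finset.sum_le_sum_of_subset_of_nonneg (Finset.subset_univ _)
            intro z _ _
            split <;> norm_num
      _ = ((Finset.univ.filter fun z : Fin d → Fin p =>
            (p:ℤ) ∣ ∑ j, h j * ((z j : ℕ) : ℤ)).card : ℝ) := by
            rw [Finset.sum_boole]
      _ ≤ (((p:ℕ)^(d-1) : ℕ) : ℝ) := by exact_mod_cast count_le hp h j0 hj0
      _ = (p:ℝ)^(d-1) := by push_cast; ring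
    have hnn : 0 ≤ (∑ z ∈ Gset d α γ lam p,
        (if (p : ℤ) ∣ ∑ j, h j * ((z j : ℕ) : ℤ) then (1 : ℝ) else 0)) :=
      Finset.sum_nonneg (fun z _ => by split <;> norm_num)
    have step1 : ((Gset d α γ lam p).card : ℝ)⁻¹ *
        (∑ z ∈ Gset d α γ lam p,
          (if (p : ℤ) ∣ ∑ j, h j * ((z j : ℕ) : ℤ) then (1 : ℝ) else 0))
        ≤ ((Gset d α γ lam p).card : ℝ)⁻¹ * (p:ℝ)^(d-1) :=
      mul_le_mul_of_nonneg_left hsum (inv_nonneg.2 hGpos.le)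
    have hpd : (p:ℝ)^d = (p:ℝ)^(d-1) * p := by
      rw [← pow_succ]
      congr 1
      omega
    have step2 : ((Gset d α γ lam p).card : ℝ)⁻¹ * (p:ℝ)^(d-1) ≤ 2 / p := by
      have hinv : ((Gset d α γ lam p).card : ℝ)⁻¹ ≤ ((p:ℝ)^d / 2)⁻¹ := by
        apply inv_anti₀ (by positivity) hhalf
      have hpow : (0:ℝ) ≤ (p:ℝ)^(d-1) := by positivity
      calc ((Gset d α γ lam p).card : ℝ)⁻¹ * (p:ℝ)^(d-1)
          ≤ ((p:ℝ)^d / 2)⁻¹ * (p:ℝ)^(d-1) := mul_le_mul_of_nonneg_right hinv hpow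
      _ = 2 / p := by
          rw [hpd]
          field_simp
    linarith
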